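/- arXiv:1810.11059 — 3 statements merged into one kernel-verified Lean document; each statement's English description precedes it below -/
import Mathlib

section
/- Let ‖·‖ be a norm on a vector space V for which there exists a convex differentiable function Ψ : V → R such that Ψ(x) ≥ (1/2)‖x‖² for all x, Ψ(0) = 0, and Ψ is β-smooth with respect to ‖·‖, i.e. Ψ(x) ≤ Ψ(y) + ⟨∇Ψ(y), x−y⟩ + (β/2)‖x−y‖² for all x,y ∈ V. Then for any fixed vectors x_1,…,x_n ∈ V, E_ε ‖Σ_{t=1}^n ε_t x_t‖ ≤ sqrt(β Σ_{t=1}^n ‖x_t‖²), where ε_1,…,ε_n are i.i.d. Rademacher random variables. -/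
open MeasureTheory Finset
open scoped RealInnerProductSpace

noncomputable section

/-- `Euc d` is Euclidean space `ℝ^d`. -/
abbrev Euc (d : ℕ) : Type := EuclideanSpace ℝ (Fin d)

/-- Expectation over i.i.d. Rademacher signs `ε ∈ {±1}ⁿ`. -/
def Esign (n : ℕ) (f : (Fin n → ℝ) → ℝ) : ℝ :=
  (∑ ε : Fin n → Bool, f (fun t => if ε t then 1 else -1)) / 2 ^ n

/-- A (genuine) norm on `ℝ^d`, given as an arbitrary real-valued function. -/
def IsNorm {d : ℕ} (N : Euc d → ℝ) : Prop :=
  (∀ x y, N (x + y) ≤ N x + N y) ∧ (∀ (a : ℝ) (x : Euc d), N (a • x) = |a| * N x) ∧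
    (∀ x, N x = 0 → x = 0)

/-- The dual norm of `N`: `‖w‖_* = sup {⟨w,x⟩ : N x ≤ 1}`. -/
def dualNorm {d : ℕ} (N : Euc d → ℝ) (w : Euc d) : ℝ :=
  sSup {r : ℝ | ∃ x : Euc d, N x ≤ 1 ∧ r = ⟪w, x⟫}

/-- Key induction: conditional expectation bound for the smooth potential. -/
lemma esign_psi_aux {d : ℕ} (N : Euc d → ℝ) (Ψ : Euc d → ℝ) (β : ℝ)
    (key : ∀ y v : Euc d, Ψ (y + v) + Ψ (y - v) ≤ 2 * Ψ y + β * (N v) ^ 2) :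
    ∀ (n : ℕ) (x : Fin n → Euc d) (y : Euc d),
      (∑ ε : Fin n → Bool, Ψ (y + ∑ t, (if ε t then (1:ℝ) else -1) • x t)) / 2 ^ n
        ≤ Ψ y + (β / 2) * ∑ t, (N (x t)) ^ 2 := by
  intro n
  induction n with
  | zero =>
      intro x y
      simp
  | succ n ih =>
      intro x y
      have hsum : (∑ ε : Fin (n+1) → Bool, Ψ (y + ∑ t, (if ε t then (1:ℝ) else -1) • x t))
          = ∑ p : Bool × (Fin n → Bool),
              Ψ ((y + (if p.1 then (1:ℝ) else -1) • x 0)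
                 + ∑ t, (if p.2 t then (1:ℝ) else -1) • x t.succ) := by
        rw [← Fintype.sum_equiv (Fin.consEquiv fun _ => Bool)
          (fun p => Ψ ((y + (if p.1 then (1:ℝ) else -1) • x 0)
                 + ∑ t, (if p.2 t then (1:ℝ) else -1) • x t.succ))
          (fun ε => Ψ (y + ∑ t, (if ε t then (1:ℝ) else -1) • x t))]
        intro p
        simp [Fin.consEquiv, Fin.sum_univ_succ, add_assoc]
      rw [hsum, Fintype.sum_prod_type, Fintype.sum_bool]
      have h2n : (0:ℝ) < 2 ^ n := by positivity
      have ht := ih (fun t => x t.succ) (y + x 0)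
      have hf := ih (fun t => x t.succ) (y - x 0)
      rw [div_le_iff₀ h2n] at ht hf
      have hk := key y (x 0)
      have hsub : y + (-1 : ℝ) • x 0 = y - x 0 := by
        simp [sub_eq_add_neg]
      rw [div_le_iff₀ (by positivity : (0:ℝ) < 2 ^ (n+1))]
      simp only [show ((true : Bool) = true) = True by simp,
        show ((false : Bool) = true) = False by simp, if_true, if_false, one_smul, hsub]
      rw [Fin.sum_univ_succ]
      have h2pow : (2:ℝ) ^ (n+1) = 2 * 2 ^ n := by ring
      rw [h2pow]
      nlinarith [h2n, ht, hf, hk]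

/-- If the norm `N` admits a convex differentiable function `Ψ` with
`Ψ(x) ≥ ½ N(x)²`, `Ψ(0) = 0`, and `Ψ` is `β`-smooth with respect to `N`, then for any fixed
vectors `x₁,…,xₙ`, the expected norm of the Rademacher sum is at most `√(β Σ N(x_t)²)`. -/
theorem rademacher_sum_smooth_norm {d n : ℕ} (N : Euc d → ℝ) (hN : IsNorm N)
    (Ψ : Euc d → ℝ) (hconv : ConvexOn ℝ Set.univ Ψ) (hdiff : Differentiable ℝ Ψ)
    (hlb : ∀ x : Euc d, (1 / 2) * (N x) ^ 2 ≤ Ψ x) (hzero : Ψ 0 = 0) (β : ℝ)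
    (hsmooth : ∀ x y : Euc d,
      Ψ x ≤ Ψ y + ⟪gradient Ψ y, x - y⟫ + (β / 2) * (N (x - y)) ^ 2)
    (x : Fin n → Euc d) :
    Esign n (fun ε => N (∑ t, ε t • x t)) ≤ Real.sqrt (β * ∑ t, (N (x t)) ^ 2) := by
  obtain ⟨hadd, hsmul, -⟩ := hN
  have hNneg : ∀ v : Euc d, N (-v) = N v := by
    intro v
    have := hsmul (-1) v
    simpa using this
  -- averaging two smoothness inequalities kills the gradient term
  have key : ∀ y v : Euc d, Ψ (y + v) + Ψ (y - v) ≤ 2 * Ψ y + β * (N v) ^ 2 := by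
    intro y v
    have h1 := hsmooth (y + v) y
    have h2 := hsmooth (y - v) y
    have e1 : y + v - y = v := by abel
    have e2 : y - v - y = -v := by abel
    rw [e1] at h1
    rw [e2, hNneg, inner_neg_right] at h2
    linarith
  have hmain := esign_psi_aux N Ψ β key n x 0
  simp only [zero_add, hzero] at hmain
  -- Jensen (Cauchy-Schwarz) : (E f)² ≤ E f²
  set S : (Fin n → Bool) → Euc d :=
    fun ε => ∑ t, (if ε t then (1:ℝ) else -1) • x t with hS
  have hjen : ((∑ ε : Fin n → Bool, N (S ε)) / 2 ^ n) ^ 2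
      ≤ (∑ ε : Fin n → Bool, (N (S ε)) ^ 2) / 2 ^ n := by
    have hcs := sq_sum_le_card_mul_sum_sq (s := (Finset.univ : Finset (Fin n → Bool)))
      (f := fun ε => N (S ε))
    have hcard : ((Finset.univ : Finset (Fin n → Bool)).card : ℝ) = 2 ^ n := by
      simp [Finset.card_univ, Fintype.card_fun]
    rw [div_pow, div_le_div_iff₀ (by positivity) (by positivity)]
    calc (∑ ε : Fin n → Bool, N (S ε)) ^ 2 * 2 ^ n
        ≤ (2 ^ n * ∑ ε : Fin n → Bool, (N (S ε)) ^ 2) * 2 ^ n := by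
          have : (∑ ε : Fin n → Bool, N (S ε)) ^ 2
              ≤ 2 ^ n * ∑ ε : Fin n → Bool, (N (S ε)) ^ 2 := by
            calc (∑ ε : Fin n → Bool, N (S ε)) ^ 2
                ≤ ((Finset.univ : Finset (Fin n → Bool)).card : ℝ)
                  * ∑ ε : Fin n → Bool, (N (S ε)) ^ 2 := by exact_mod_cast hcs
              _ = 2 ^ n * ∑ ε : Fin n → Bool, (N (S ε)) ^ 2 := by rw [hcard]
          exact mul_le_mul_of_nonneg_right this (by positivity)
      _ = (∑ ε : Fin n → Bool, (N (S ε)) ^ 2) * ((2 ^ n) ^ 2) := by ring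
  have hlb' : (∑ ε : Fin n → Bool, (N (S ε)) ^ 2) / 2 ^ n
      ≤ 2 * ((∑ ε : Fin n → Bool, Ψ (S ε)) / 2 ^ n) := by
    rw [div_le_iff₀ (by positivity : (0:ℝ) < 2 ^ n)]
    have hsum : ∑ ε : Fin n → Bool, (N (S ε)) ^ 2 ≤ ∑ ε : Fin n → Bool, 2 * Ψ (S ε) := by
      apply Finset.sum_le_sum
      intro ε _
      have := hlb (S ε)
      linarith
    calc ∑ ε : Fin n → Bool, (N (S ε)) ^ 2
        ≤ ∑ ε : Fin n → Bool, 2 * Ψ (S ε) := hsum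
      _ = 2 * (∑ ε : Fin n → Bool, Ψ (S ε)) := by rw [Finset.mul_sum]
      _ = 2 * ((∑ ε : Fin n → Bool, Ψ (S ε)) / 2 ^ n) * 2 ^ n := by
          field_simp
  apply Real.le_sqrt_of_sq_le
  show (Esign n (fun ε => N (∑ t, ε t • x t))) ^ 2 ≤ β * ∑ t, (N (x t)) ^ 2
  have hE : Esign n (fun ε => N (∑ t, ε t • x t))
      = (∑ ε : Fin n → Bool, N (S ε)) / 2 ^ n := rfl
  rw [hE]
  calc ((∑ ε : Fin n → Bool, N (S ε)) / 2 ^ n) ^ 2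
      ≤ (∑ ε : Fin n → Bool, (N (S ε)) ^ 2) / 2 ^ n := hjen
    _ ≤ 2 * ((∑ ε : Fin n → Bool, Ψ (S ε)) / 2 ^ n) := hlb'
    _ ≤ 2 * (0 + (β / 2) * ∑ t, (N (x t)) ^ 2) := by
        have := hmain
        linarith
    _ = β * ∑ t, (N (x t)) ^ 2 := by ring
end
end

section
/- (GD condition for the generalized linear model, first-order form.) Consider the generalized linear model setting: ‖·‖ a norm on R^d with dual ‖·‖_*, X = {x ∈ R^d : ‖x‖ ≤ R}, W = {w ∈ R^d : ‖w‖_* ≤ B}, Y = {0,1}, link σ : R → [0,1], loss ℓ(w;x,y) = (σ(⟨w,x⟩) − y)², and population risk L_D(w) = E_{(x,y)~D} ℓ(w;x,y) for a distribution D on X×Y. Assume on S = [−BR, BR]: (a) max{σ'(s), σ''(s)} ≤ C_σ with C_σ ≥ 1; (b) σ'(s) ≥ c_σ > 0; and (c) E[y | x] = σ(⟨w*,x⟩) for some w* ∈ W. Then for all w ∈ W: L_D(w) − L_D(w*) ≤ (B·C_σ/c_σ)·‖∇L_D(w)‖. -/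
open MeasureTheory Finset
open scoped RealInnerProductSpace

noncomputable section

/-! Write `u = σ ⟪w, x⟫` and `u⋆ = σ ⟪w⋆, x⟫`. Well-specification makes the residual `u⋆ - y`
orthogonal to every bounded function of `x`, so in both `L(w) - L(w⋆) = E[(u - y)² - (u⋆ - y)²]`
and `⟪∇L(w), w - w⋆⟫ = 2 E[(u - y) σ'(⟪w, x⟫) ⟪x, w - w⋆⟫]` the label `y` may be replaced by `u⋆`.
By the mean value theorem `u - u⋆ = σ'(ξ) ⟪w - w⋆, x⟫` with `ξ ∈ [-BR, BR]`, whence pointwise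
`c_σ (u - u⋆)² ≤ C_σ (u - u⋆) σ'(⟪w, x⟫) ⟪x, w - w⋆⟫`. Integrating, and bounding
`⟪∇L(w), w - w⋆⟫ ≤ ‖w - w⋆‖_* ‖∇L(w)‖ ≤ 2B ‖∇L(w)‖`, gives the claim. -/

namespace IsNorm

variable {d : ℕ} {N : Euc d → ℝ}

def toSeminorm (hN : IsNorm N) : Seminorm ℝ (Euc d) :=
  Seminorm.of N hN.1 fun a x => by simpa using hN.2.1 a x

lemma nonneg (hN : IsNorm N) (x : Euc d) : 0 ≤ N x := apply_nonneg hN.toSeminorm x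

lemma map_neg (hN : IsNorm N) (x : Euc d) : N (-x) = N x := map_neg_eq_map hN.toSeminorm x

lemma map_zero (hN : IsNorm N) : N 0 = 0 := _root_.map_zero hN.toSeminorm

lemma continuous (hN : IsNorm N) : Continuous N :=
  continuousOn_univ.1 <| hN.toSeminorm.convexOn.continuousOn isOpen_univ

lemma exists_pos_mul_norm_le (hN : IsNorm N) : ∃ c > 0, ∀ x, c * ‖x‖ ≤ N x := by
  have hpos : ∀ x ∈ Metric.sphere (0 : Euc d) 1, 0 < N x := fun x hx =>
    (hN.nonneg x).lt_of_ne fun h => by simp [hN.2.2 x h.symm] at hx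
  obtain ⟨c, hc, hcN⟩ := (isCompact_sphere 0 1).exists_forall_le' hN.continuous.continuousOn hpos
  refine ⟨c, hc, fun x => ?_⟩
  rcases eq_or_ne x 0 with rfl | hx
  · simp [hN.map_zero]
  have hnx : 0 < ‖x‖ := norm_pos_iff.2 hx
  have hcx := hcN (‖x‖⁻¹ • x) (by simp [norm_smul, hnx.ne'])
  rwa [hN.2.1, abs_of_pos (inv_pos.2 hnx), le_inv_mul_iff₀' hnx] at hcx

lemma bddAbove_inner_unitBall (hN : IsNorm N) (w : Euc d) :
    BddAbove {r : ℝ | ∃ x : Euc d, N x ≤ 1 ∧ r = ⟪w, x⟫} := by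
  obtain ⟨c, hc, hcN⟩ := hN.exists_pos_mul_norm_le
  refine ⟨‖w‖ / c, ?_⟩
  rintro _ ⟨x, hx, rfl⟩
  have hxc : ‖x‖ ≤ 1 / c := by rw [le_div_iff₀' hc]; linarith [hcN x]
  calc ⟪w, x⟫ ≤ ‖w‖ * ‖x‖ := real_inner_le_norm w x
    _ ≤ ‖w‖ * (1 / c) := by gcongr
    _ = ‖w‖ / c := by ring

lemma inner_le_dualNorm_mul (hN : IsNorm N) (w x : Euc d) : ⟪w, x⟫ ≤ dualNorm N w * N x := by
  rcases (hN.nonneg x).eq_or_lt with h | h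
  · simp [hN.2.2 x h.symm, hN.map_zero]
  have hmem : ⟪w, (N x)⁻¹ • x⟫ ∈ {r : ℝ | ∃ y : Euc d, N y ≤ 1 ∧ r = ⟪w, y⟫} :=
    ⟨(N x)⁻¹ • x, by rw [hN.2.1, abs_of_pos (inv_pos.2 h), inv_mul_cancel₀ h.ne'], rfl⟩
  have hle := le_csSup (hN.bddAbove_inner_unitBall w) hmem
  rwa [real_inner_smul_right, inv_mul_le_iff₀ h, mul_comm] at hle

lemma abs_inner_le_dualNorm_mul (hN : IsNorm N) (w x : Euc d) :
    |⟪w, x⟫| ≤ dualNorm N w * N x := by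
  refine abs_le.2 ⟨?_, hN.inner_le_dualNorm_mul w x⟩
  have hneg := hN.inner_le_dualNorm_mul w (-x)
  rw [inner_neg_right, hN.map_neg] at hneg
  linarith

lemma inner_mem_Icc (hN : IsNorm N) {B R : ℝ} (hB : 0 ≤ B) {w x : Euc d}
    (hw : dualNorm N w ≤ B) (hx : N x ≤ R) : ⟪w, x⟫ ∈ Set.Icc (-(B * R)) (B * R) :=
  abs_le.1 <| (hN.abs_inner_le_dualNorm_mul w x).trans <|
    (mul_le_mul_of_nonneg_right hw (hN.nonneg x)).trans (mul_le_mul_of_nonneg_left hx hB)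

lemma inner_sub_le_add_dualNorm_mul (hN : IsNorm N) (g w w' : Euc d) :
    ⟪g, w - w'⟫ ≤ (dualNorm N w + dualNorm N w') * N g := by
  have h := hN.inner_le_dualNorm_mul w g
  have h' := neg_abs_le ⟪w', g⟫ |>.trans' (neg_le_neg (hN.abs_inner_le_dualNorm_mul w' g))
  rw [inner_sub_right, real_inner_comm w g, real_inner_comm w' g]
  linarith

end IsNorm

section Regression

variable {α : Type*} [MeasurableSpace α] {μ : Measure (α × ℝ)} [IsFiniteMeasure μ] {g : α → ℝ}

lemma integral_mul_regression_sub_eq_zero (hy : Integrable Prod.snd μ)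
    (hg : Integrable (fun p => g p.1) μ)
    (hreg : ∀ A : Set α, MeasurableSet A →
      ∫ p in Prod.fst ⁻¹' A, p.2 ∂μ = ∫ p in Prod.fst ⁻¹' A, g p.1 ∂μ)
    {f : α → ℝ} (hf : Measurable f) {C : ℝ} (hfC : ∀ᵐ p ∂μ, ‖f p.1‖ ≤ C) :
    ∫ p, f p.1 * (g p.1 - p.2) ∂μ = 0 := by
  set m : MeasurableSpace (α × ℝ) := MeasurableSpace.comap Prod.fst inferInstance
  have hm : m ≤ Prod.instMeasurableSpace := measurable_fst.comap_le
  have hres : Integrable (fun p : α × ℝ => g p.1 - p.2) μ := hg.sub hy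
  -- `hreg` says `E[y | x] = g x`: the residual has conditional expectation zero.
  have hcond : (0 : α × ℝ → ℝ) =ᵐ[μ] μ[fun p => g p.1 - p.2 | m] := by
    refine ae_eq_condExp_of_forall_setIntegral_eq hm hres (fun _ _ _ => integrableOn_zero)
      ?_ aestronglyMeasurable_zero
    rintro _ ⟨A, hA, rfl⟩ -
    rw [integral_sub hg.integrableOn hy.integrableOn, hreg A hA, sub_self]
    simp
  have hfm : StronglyMeasurable[m] (fun p : α × ℝ => f p.1) :=
    (hf.comp (Measurable.of_comap_le le_rfl)).stronglyMeasurable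
  calc ∫ p, f p.1 * (g p.1 - p.2) ∂μ
      = ∫ p, (μ[(fun p : α × ℝ => f p.1) * fun p => g p.1 - p.2 | m]) p ∂μ :=
        (integral_condExp hm).symm
    _ = ∫ p, f p.1 * (μ[fun p => g p.1 - p.2 | m]) p ∂μ :=
        integral_congr_ae (condExp_stronglyMeasurable_mul_of_bound hm hfm hres C hfC)
    _ = 0 := integral_eq_zero_of_ae (hcond.mono fun p hp => by simp [← hp])

end Regression

lemma exists_mem_uIcc_sub_eq_deriv_mul {f : ℝ → ℝ} (hf : Differentiable ℝ f) (s t : ℝ) :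
    ∃ ξ ∈ Set.uIcc s t, f s - f t = deriv f ξ * (s - t) := by
  wlog h : t ≤ s generalizing s t
  · obtain ⟨ξ, hξ, he⟩ := this t s (le_of_not_ge h)
    exact ⟨ξ, Set.uIcc_comm s t ▸ hξ, by linarith⟩
  rcases h.eq_or_lt with rfl | h
  · exact ⟨t, Set.left_mem_uIcc, by ring⟩
  obtain ⟨ξ, hξ, he⟩ := exists_deriv_eq_slope f h hf.continuous.continuousOn hf.differentiableOn
  refine ⟨ξ, Set.Icc_subset_uIcc' (Set.Ioo_subset_Icc_self hξ), ?_⟩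
  rw [he]
  field_simp [(sub_pos.2 h).ne']

lemma mul_sq_sub_le_of_deriv_bounds {f : ℝ → ℝ} {S : Set ℝ} {c C : ℝ} (hf : Differentiable ℝ f)
    (hS : S.OrdConnected) (hc : 0 ≤ c) (hlb : ∀ s ∈ S, c ≤ deriv f s)
    (hub : ∀ s ∈ S, deriv f s ≤ C) {s t : ℝ} (hs : s ∈ S) (ht : t ∈ S) :
    c * (f s - f t) ^ 2 ≤ C * ((f s - f t) * deriv f s * (s - t)) := by
  obtain ⟨ξ, hξ, hmvt⟩ := exists_mem_uIcc_sub_eq_deriv_mul hf s t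
  have hξS : ξ ∈ S := hS.uIcc_subset hs ht hξ
  have hcξ := hlb ξ hξS
  have hξC := hub ξ hξS
  have hcs := hlb s hs
  have hslopes : c * deriv f ξ ^ 2 ≤ C * (deriv f ξ * deriv f s) := by
    nlinarith [mul_le_mul_of_nonneg_left hξC (mul_nonneg hc (hc.trans hcξ)),
      mul_le_mul_of_nonneg_left hcs (mul_nonneg (hc.trans (hcξ.trans hξC)) (hc.trans hcξ))]
  rw [hmvt]
  nlinarith [mul_le_mul_of_nonneg_right hslopes (sq_nonneg (s - t))]

lemma Continuous.integrable_of_ae_mem_isCompact {X F : Type*} [TopologicalSpace X]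
    [MeasurableSpace X] [OpensMeasurableSpace X] [NormedAddCommGroup F]
    [SecondCountableTopologyEither X F] {μ : Measure X} [IsFiniteMeasure μ] {K : Set X}
    (hK : IsCompact K) (hμK : ∀ᵐ x ∂μ, x ∈ K) {f : X → F} (hf : Continuous f) :
    Integrable f μ := by
  obtain ⟨C, hC⟩ := hK.exists_bound_of_continuousOn hf.continuousOn
  exact .of_bound hf.aestronglyMeasurable C (hμK.mono hC)

section GLMRisk

variable {E : Type*} [NormedAddCommGroup E] [InnerProductSpace ℝ E] {σ : ℝ → ℝ}

def glmLossDeriv (σ : ℝ → ℝ) (w : E) (p : E × ℝ) : E →L[ℝ] ℝ :=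
  (2 * (σ ⟪w, p.1⟫ - p.2) * deriv σ ⟪w, p.1⟫) • innerSL ℝ p.1

lemma hasFDerivAt_glmLoss (hσ : Differentiable ℝ σ) (w : E) (p : E × ℝ) :
    HasFDerivAt (fun v => (σ ⟪v, p.1⟫ - p.2) ^ 2) (glmLossDeriv σ w p) w := by
  have hinner : HasFDerivAt (fun v : E => ⟪v, p.1⟫) (innerSL ℝ p.1) w := by
    convert (innerSL ℝ p.1).hasFDerivAt using 1
    ext v
    exact real_inner_comm _ _
  have := (((hσ _).hasDerivAt.comp_hasFDerivAt w hinner).sub_const p.2).pow 2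
  refine this.congr_fderiv ?_
  ext v
  simp only [glmLossDeriv, smul_apply, innerSL_apply_apply, smul_eq_mul, nsmul_eq_mul,
    Function.comp_apply]
  ring

variable [FiniteDimensional ℝ E] [MeasurableSpace E] [BorelSpace E] {μ : Measure (E × ℝ)}
  [IsFiniteMeasure μ] {K : Set (E × ℝ)}

def glmRisk (σ : ℝ → ℝ) (μ : Measure (E × ℝ)) (w : E) : ℝ :=
  ∫ p, (σ ⟪w, p.1⟫ - p.2) ^ 2 ∂μ

lemma hasFDerivAt_glmRisk (hσ : Differentiable ℝ σ) (hσ' : Continuous (deriv σ))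
    (hK : IsCompact K) (hμK : ∀ᵐ p ∂μ, p ∈ K) (w : E) :
    HasFDerivAt (glmRisk σ μ) (∫ p, glmLossDeriv σ w p ∂μ) w := by
  have hσc := hσ.continuous
  have hderiv_cont : Continuous fun q : E × (E × ℝ) => glmLossDeriv σ q.1 q.2 := by
    unfold glmLossDeriv; fun_prop
  obtain ⟨C, hC⟩ := ((isCompact_closedBall w 1).prod hK).exists_bound_of_continuousOn
    hderiv_cont.continuousOn
  have hbound : ∀ᵐ p ∂μ, ∀ v ∈ Metric.ball w 1, ‖glmLossDeriv σ v p‖ ≤ C :=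
    hμK.mono fun p hp v hv => hC (v, p) ⟨Metric.ball_subset_closedBall hv, hp⟩
  exact hasFDerivAt_integral_of_dominated_of_fderiv_le (Metric.ball_mem_nhds w one_pos)
    (.of_forall fun v => (by fun_prop : Continuous _).aestronglyMeasurable)
    ((by fun_prop : Continuous _).integrable_of_ae_mem_isCompact hK hμK)
    (by unfold glmLossDeriv; fun_prop : Continuous _).aestronglyMeasurable hbound
    (integrable_const C) (.of_forall fun p v _ => hasFDerivAt_glmLoss hσ v p)

lemma inner_gradient_glmRisk (hσ : Differentiable ℝ σ) (hσ' : Continuous (deriv σ))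
    (hK : IsCompact K) (hμK : ∀ᵐ p ∂μ, p ∈ K) (w v : E) :
    ⟪gradient (glmRisk σ μ) w, v⟫ =
      ∫ p, 2 * (σ ⟪w, p.1⟫ - p.2) * deriv σ ⟪w, p.1⟫ * ⟪p.1, v⟫ ∂μ := by
  have hσc := hσ.continuous
  have hint : Integrable (glmLossDeriv σ w) μ :=
    (by unfold glmLossDeriv; fun_prop : Continuous _).integrable_of_ae_mem_isCompact hK hμK
  rw [(hasFDerivAt_iff_hasGradientAt.1 (hasFDerivAt_glmRisk hσ hσ' hK hμK w)).gradient,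
    InnerProductSpace.toDual_symm_apply, ContinuousLinearMap.integral_apply hint]
  simp [glmLossDeriv, innerSL_apply_apply]

theorem two_mul_glmRisk_sub_le_inner_gradient (hσ : Differentiable ℝ σ)
    (hσ' : Continuous (deriv σ)) {S : Set ℝ} (hS : S.OrdConnected) {c C : ℝ} (hc : 0 ≤ c)
    (hlb : ∀ s ∈ S, c ≤ deriv σ s) (hub : ∀ s ∈ S, deriv σ s ≤ C)
    (hK : IsCompact K) (hμK : ∀ᵐ p ∂μ, p ∈ K) {w wstar : E}
    (hreg : ∀ A : Set E, MeasurableSet A →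
      ∫ p in Prod.fst ⁻¹' A, p.2 ∂μ = ∫ p in Prod.fst ⁻¹' A, σ ⟪wstar, p.1⟫ ∂μ)
    (hwS : ∀ᵐ p ∂μ, ⟪w, p.1⟫ ∈ S ∧ ⟪wstar, p.1⟫ ∈ S) :
    2 * c * (glmRisk σ μ w - glmRisk σ μ wstar) ≤
      C * ⟪gradient (glmRisk σ μ) w, w - wstar⟫ := by
  have hσc := hσ.continuous
  have hint : ∀ F : E × ℝ → ℝ, Continuous F → Integrable F μ :=
    fun F hF => hF.integrable_of_ae_mem_isCompact hK hμK
  -- `C ∇ℓ_w - 2c (ℓ_w - ℓ_wstar)` is a pointwise nonnegative term plus `f x` times the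
  -- residual `σ ⟪wstar, x⟫ - y`.
  set f : E → ℝ := fun x =>
    2 * C * deriv σ ⟪w, x⟫ * ⟪x, w - wstar⟫ - 4 * c * (σ ⟪w, x⟫ - σ ⟪wstar, x⟫)
  obtain ⟨Cf, hCf⟩ := hK.exists_bound_of_continuousOn
    (by fun_prop : Continuous fun p : E × ℝ => f p.1).continuousOn
  have hres : ∫ p, f p.1 * (σ ⟪wstar, p.1⟫ - p.2) ∂μ = 0 :=
    integral_mul_regression_sub_eq_zero (g := fun x => σ ⟪wstar, x⟫) (hint _ continuous_snd)
      (hint _ (by fun_prop)) hreg (by fun_prop) (hμK.mono hCf)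
  have hpt : ∀ᵐ p ∂μ, 2 * c * ((σ ⟪w, p.1⟫ - p.2) ^ 2 - (σ ⟪wstar, p.1⟫ - p.2) ^ 2) +
      f p.1 * (σ ⟪wstar, p.1⟫ - p.2) ≤
      C * (2 * (σ ⟪w, p.1⟫ - p.2) * deriv σ ⟪w, p.1⟫ * ⟪p.1, w - wstar⟫) := by
    filter_upwards [hwS] with p ⟨hw, hws⟩
    have hinner : ⟪p.1, w - wstar⟫ = ⟪w, p.1⟫ - ⟪wstar, p.1⟫ := by
      rw [inner_sub_right, real_inner_comm p.1 w, real_inner_comm p.1 wstar]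
    simp only [f, hinner]
    linear_combination 2 * mul_sq_sub_le_of_deriv_bounds hσ hS hc hlb hub hw hws
  calc 2 * c * (glmRisk σ μ w - glmRisk σ μ wstar)
      = ∫ p, 2 * c * ((σ ⟪w, p.1⟫ - p.2) ^ 2 - (σ ⟪wstar, p.1⟫ - p.2) ^ 2) ∂μ := by
        rw [integral_const_mul, glmRisk, glmRisk,
          integral_sub (hint _ (by fun_prop)) (hint _ (by fun_prop))]
    _ = ∫ p, 2 * c * ((σ ⟪w, p.1⟫ - p.2) ^ 2 - (σ ⟪wstar, p.1⟫ - p.2) ^ 2) +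
          f p.1 * (σ ⟪wstar, p.1⟫ - p.2) ∂μ := by
        rw [integral_add (hint _ (by fun_prop)) (hint _ (by fun_prop)), hres, add_zero]
    _ ≤ ∫ p, C * (2 * (σ ⟪w, p.1⟫ - p.2) * deriv σ ⟪w, p.1⟫ * ⟪p.1, w - wstar⟫) ∂μ :=
        integral_mono_ae (hint _ (by fun_prop)) (hint _ (by fun_prop)) hpt
    _ = C * ⟪gradient (glmRisk σ μ) w, w - wstar⟫ := by
        rw [integral_const_mul, inner_gradient_glmRisk hσ hσ' hK hμK]

end GLMRisk

theorem glm_gradient_domination_first_order_general {d : ℕ} (N : Euc d → ℝ) (hN : IsNorm N)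
    (R B Cσ cσ : ℝ) (hB : 0 ≤ B)
    (σ : ℝ → ℝ)
    (hσd1 : Differentiable ℝ σ) (hσd2 : Differentiable ℝ (deriv σ))
    (hCσ : 1 ≤ Cσ)
    (hub : ∀ s ∈ Set.Icc (-(B * R)) (B * R), deriv σ s ≤ Cσ ∧ deriv (deriv σ) s ≤ Cσ)
    (hcσ : 0 < cσ) (hlb : ∀ s ∈ Set.Icc (-(B * R)) (B * R), cσ ≤ deriv σ s)
    (D : Measure (Euc d × ℝ)) [IsProbabilityMeasure D]
    (hsupp : ∀ᵐ p ∂D, N p.1 ≤ R ∧ (p.2 = 0 ∨ p.2 = 1))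
    (wstar : Euc d) (hws : dualNorm N wstar ≤ B)
    (hwell : ∀ A : Set (Euc d), MeasurableSet A →
      ∫ p in Prod.fst ⁻¹' A, p.2 ∂D = ∫ p in Prod.fst ⁻¹' A, σ ⟪wstar, p.1⟫ ∂D)
    (LD : Euc d → ℝ) (hLD : LD = fun w => ∫ p, (σ ⟪w, p.1⟫ - p.2) ^ 2 ∂D) :
    ∀ w : Euc d, dualNorm N w ≤ B →
      LD w - LD wstar ≤ (B * Cσ / cσ) * N (gradient LD w) := by
  intro w hw
  rw [show LD = glmRisk σ D from hLD]
  obtain ⟨c, hc, hcN⟩ := hN.exists_pos_mul_norm_le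
  have hμK : ∀ᵐ p ∂D, p ∈ Metric.closedBall (0 : Euc d) (R / c) ×ˢ Set.Icc (0 : ℝ) 1 := by
    filter_upwards [hsupp] with p ⟨hx, hy⟩
    refine ⟨mem_closedBall_zero_iff.2 ((le_div_iff₀' hc).2 ((hcN p.1).trans hx)), ?_⟩
    rcases hy with h | h <;> simp [h]
  have hdom := two_mul_glmRisk_sub_le_inner_gradient hσd1 hσd2.continuous Set.ordConnected_Icc
    hcσ.le hlb (fun s hs => (hub s hs).1) ((isCompact_closedBall _ _).prod isCompact_Icc) hμK
    hwell (hsupp.mono fun p hp => ⟨hN.inner_mem_Icc hB hw hp.1, hN.inner_mem_Icc hB hws hp.1⟩)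
  have hpair : ⟪gradient (glmRisk σ D) w, w - wstar⟫ ≤ 2 * B * N (gradient (glmRisk σ D) w) :=
    (hN.inner_sub_le_add_dualNorm_mul _ w wstar).trans
      (mul_le_mul_of_nonneg_right (by linarith) (hN.nonneg _))
  have hchain := hdom.trans (mul_le_mul_of_nonneg_left hpair (by linarith))
  rw [div_mul_eq_mul_div, le_div_iff₀ hcσ]
  linarith

/-- Gradient-domination (first-order form) for the generalized linear model:
under the regularity assumptions on the link `σ` and well-specification of the model, for every
`w` in the dual-norm ball of radius `B`, the excess population risk is bounded by
`(B·C_σ/c_σ)·‖∇L_D(w)‖`. -/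
theorem glm_gradient_domination_first_order {d : ℕ} (N : Euc d → ℝ) (hN : IsNorm N)
    (R B Cσ cσ : ℝ) (hR : 0 ≤ R) (hB : 0 ≤ B)
    (σ : ℝ → ℝ) (hσrange : ∀ s, σ s ∈ Set.Icc (0 : ℝ) 1)
    (hσd1 : Differentiable ℝ σ) (hσd2 : Differentiable ℝ (deriv σ))
    (hCσ : 1 ≤ Cσ)
    (hub : ∀ s ∈ Set.Icc (-(B * R)) (B * R), deriv σ s ≤ Cσ ∧ deriv (deriv σ) s ≤ Cσ)
    (hcσ : 0 < cσ) (hlb : ∀ s ∈ Set.Icc (-(B * R)) (B * R), cσ ≤ deriv σ s)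
    (D : Measure (Euc d × ℝ)) [IsProbabilityMeasure D]
    (hsupp : ∀ᵐ p ∂D, N p.1 ≤ R ∧ (p.2 = 0 ∨ p.2 = 1))
    (wstar : Euc d) (hws : dualNorm N wstar ≤ B)
    (hwell : ∀ A : Set (Euc d), MeasurableSet A →
      ∫ p in Prod.fst ⁻¹' A, p.2 ∂D = ∫ p in Prod.fst ⁻¹' A, σ ⟪wstar, p.1⟫ ∂D)
    (LD : Euc d → ℝ) (hLD : LD = fun w => ∫ p, (σ ⟪w, p.1⟫ - p.2) ^ 2 ∂D) :
    ∀ w : Euc d, dualNorm N w ≤ B →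
      LD w - LD wstar ≤ (B * Cσ / cσ) * N (gradient LD w) :=
  glm_gradient_domination_first_order_general N hN R B Cσ cσ hB σ hσd1 hσd2 hCσ hub hcσ hlb D hsupp
    wstar hws hwell LD hLD
end
end

section
/- (Lower bound for gradient Rademacher complexity of a single ReLU.) Consider the ReLU setting: W = {w ∈ R^d : ‖w‖₂ ≤ 1}, loss ℓ(w;x,y) = max{−⟨w,x⟩·y, 0} with subgradient representative ∇ℓ(w;x,y) = −y·1{y⟨w,x⟩ ≤ 0}·x. There exists an absolute constant c > 0 such that for all n, d ∈ N there exist x_1,…,x_n ∈ R^d with ‖x_t‖₂ ≤ 1 and labels y_1,…,y_n ∈ {−1,+1} such that E_ε sup_{w : ‖w‖₂ ≤ 1} ‖Σ_{t=1}^n ε_t ∇ℓ(w;x_t,y_t)‖₂ ≥ c · min( sqrt(d·n), n ), where ε_1,…,ε_n are i.i.d. Rademacher variables. -/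
/-! Put a unit vector `u` and orthonormal vectors `v₀, …, v_{k-1}` orthogonal to it in `ℝ^d`,
`k = min (d - 1) n`, split the samples into `k` groups of size at least `n / k`, and give every
sample of group `j` the instance `(u + vⱼ)/√2` and label `1`. Given the signs, a weight
`w ∝ ∑ⱼ ∓vⱼ` switches the ReLU gradient on exactly in the groups whose sign sum `Sⱼ` is positive;
all active gradients have the same component `-1/√2` along `u`, so the norm of the Rademacher sum
is at least `(1/√2) ∑ⱼ max Sⱼ 0`. Khintchine's inequality, obtained from the second and fourth
moments through `(E S²)³ ≤ (E |S|)² E S⁴`, gives `E (max Sⱼ 0) = E |Sⱼ| / 2 ≥ √(m/3) / 2` for a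
group of size `m`, hence an expected supremum of order `k √(n/k) ≳ min (√(dn)) n`. In dimension
one all samples equal `u`, `w = 0` switches every gradient on, and the bound `√(n/3)` is
Khintchine's inequality again. -/

open MeasureTheory Finset
open scoped RealInnerProductSpace

noncomputable section

lemma sum_sq_pow_three_le_sq_sum_abs_mul_sum_pow_four {ι : Type*} (s : Finset ι) (f : ι → ℝ) :
    (∑ i ∈ s, f i ^ 2) ^ 3 ≤ (∑ i ∈ s, |f i|) ^ 2 * ∑ i ∈ s, f i ^ 4 := by
  set A₁ := ∑ i ∈ s, |f i|
  set A₂ := ∑ i ∈ s, f i ^ 2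
  set A₃ := ∑ i ∈ s, |f i| ^ 3
  set A₄ := ∑ i ∈ s, f i ^ 4
  have h₁₃ : A₂ ^ 2 ≤ A₁ * A₃ := sum_sq_le_sum_mul_sum_of_sq_le_mul s
    (fun i _ => abs_nonneg _) (fun i _ => by positivity) fun i _ =>
      le_of_eq (by rw [← sq_abs (f i)]; ring)
  have h₂₄ : A₃ ^ 2 ≤ A₂ * A₄ := sum_sq_le_sum_mul_sum_of_sq_le_mul s
    (fun i _ => by positivity) (fun i _ => by positivity) fun i _ =>
      le_of_eq (by rw [← Even.pow_abs ⟨1, rfl⟩ (f i), ← Even.pow_abs ⟨2, rfl⟩ (f i)]; ring)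
  have hA₂ : 0 ≤ A₂ := sum_nonneg fun i _ => sq_nonneg _
  rcases hA₂.eq_or_lt with h0 | hpos
  · rw [← h0, zero_pow three_ne_zero]
    positivity
  refine le_of_mul_le_mul_left ?_ hpos
  calc A₂ * A₂ ^ 3 = (A₂ ^ 2) ^ 2 := by ring
    _ ≤ (A₁ * A₃) ^ 2 := pow_le_pow_left₀ (sq_nonneg _) h₁₃ 2
    _ = A₁ ^ 2 * A₃ ^ 2 := by ring
    _ ≤ A₁ ^ 2 * (A₂ * A₄) := mul_le_mul_of_nonneg_left h₂₄ (sq_nonneg _)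
    _ = A₂ * (A₁ ^ 2 * A₄) := by ring

section RademacherSum

variable {ι : Type*}

def rademacherSum (A : Finset ι) (ε : ι → Bool) : ℝ := ∑ t ∈ A, if ε t then 1 else -1

variable [DecidableEq ι]

lemma rademacherSum_insert {a : ι} {B : Finset ι} (ha : a ∉ B) (ε : ι → Bool) :
    rademacherSum (insert a B) ε = (if ε a then 1 else -1) + rademacherSum B ε :=
  sum_insert ha

variable [Fintype ι]

lemma two_mul_sum_rademacherSum_insert {a : ι} {B : Finset ι} (ha : a ∉ B) (F : ℝ → ℝ) :
    2 * ∑ ε : ι → Bool, F (rademacherSum (insert a B) ε) =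
      ∑ ε : ι → Bool, (F (rademacherSum B ε + 1) + F (rademacherSum B ε - 1)) := by
  let flip (ε : ι → Bool) : ι → Bool := Function.update ε a (!ε a)
  have hflip : Function.Involutive flip := fun ε => by
    ext j; by_cases h : j = a <;> simp [flip, h]
  have hB (ε) : rademacherSum B (flip ε) = rademacherSum B ε :=
    sum_congr rfl fun t ht => by simp [flip, Function.update_of_ne (ne_of_mem_of_not_mem ht ha)]
  rw [two_mul]
  nth_rewrite 2 [← Equiv.sum_comp hflip.toPerm]
  rw [← sum_add_distrib]
  refine sum_congr rfl fun ε _ => ?_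
  simp only [Function.Involutive.coe_toPerm, rademacherSum_insert ha, hB]
  cases h : ε a <;> simp [flip, h] <;> ring_nf

lemma sum_rademacherSum (A : Finset ι) : ∑ ε : ι → Bool, rademacherSum A ε = 0 := by
  induction A using Finset.induction_on with
  | empty => simp [rademacherSum]
  | insert a B ha ih =>
    have h := two_mul_sum_rademacherSum_insert ha id
    simp only [id, add_add_sub_cancel, ← two_mul, ← mul_sum, ih] at h
    linarith

lemma sum_rademacherSum_sq (A : Finset ι) :
    ∑ ε : ι → Bool, rademacherSum A ε ^ 2 = #A * 2 ^ Fintype.card ι := by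
  induction A using Finset.induction_on with
  | empty => simp [rademacherSum]
  | insert a B ha ih =>
    have h := two_mul_sum_rademacherSum_insert ha (· ^ 2)
    have hsq (s : ℝ) : (s + 1) ^ 2 + (s - 1) ^ 2 = 2 * s ^ 2 + 2 := by ring
    simp only [hsq, sum_add_distrib, ← mul_sum, ih, sum_const, card_univ, nsmul_eq_mul,
      Fintype.card_fun, Fintype.card_bool, Nat.cast_pow, Nat.cast_ofNat] at h
    rw [card_insert_of_notMem ha]
    push_cast
    linarith

lemma sum_rademacherSum_pow_four_le (A : Finset ι) :
    ∑ ε : ι → Bool, rademacherSum A ε ^ 4 ≤ 3 * #A ^ 2 * 2 ^ Fintype.card ι := by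
  induction A using Finset.induction_on with
  | empty => simp [rademacherSum]
  | insert a B ha ih =>
    have h := two_mul_sum_rademacherSum_insert ha (· ^ 4)
    have hpow (s : ℝ) : (s + 1) ^ 4 + (s - 1) ^ 4 = 2 * s ^ 4 + 12 * s ^ 2 + 2 := by ring
    simp only [hpow, sum_add_distrib, ← mul_sum, sum_rademacherSum_sq, sum_const, card_univ,
      nsmul_eq_mul, Fintype.card_fun, Fintype.card_bool, Nat.cast_pow, Nat.cast_ofNat] at h
    rw [card_insert_of_notMem ha]
    push_cast
    nlinarith [pow_pos (two_pos (α := ℝ)) (Fintype.card ι), (#B).cast_nonneg (α := ℝ)]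

lemma sqrt_card_div_three_mul_le_sum_abs_rademacherSum (A : Finset ι) :
    √(#A / 3) * 2 ^ Fintype.card ι ≤ ∑ ε : ι → Bool, |rademacherSum A ε| := by
  set N : ℝ := 2 ^ Fintype.card ι
  set m : ℝ := (#A : ℝ)
  set A₁ := ∑ ε : ι → Bool, |rademacherSum A ε|
  have hN : 0 < N := by positivity
  have hA₁ : 0 ≤ A₁ := sum_nonneg fun _ _ => abs_nonneg _
  rcases (Nat.cast_nonneg #A : (0 : ℝ) ≤ m).eq_or_lt with h0 | hm
  · rw [show m = 0 from h0.symm]; simpa using hA₁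
  have hHolder := sum_sq_pow_three_le_sq_sum_abs_mul_sum_pow_four univ (rademacherSum A)
  rw [sum_rademacherSum_sq] at hHolder
  have hA₁sq : m / 3 * N ^ 2 ≤ A₁ ^ 2 := by
    refine le_of_mul_le_mul_right ?_ (by positivity : 0 < 3 * m ^ 2 * N)
    calc m / 3 * N ^ 2 * (3 * m ^ 2 * N) = (m * N) ^ 3 := by ring
      _ ≤ A₁ ^ 2 * ∑ ε, rademacherSum A ε ^ 4 := hHolder
      _ ≤ A₁ ^ 2 * (3 * m ^ 2 * N) :=
        mul_le_mul_of_nonneg_left (sum_rademacherSum_pow_four_le A) (sq_nonneg _)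
  calc √(m / 3) * N = √(m / 3 * N ^ 2) := by rw [Real.sqrt_mul' _ (sq_nonneg N), Real.sqrt_sq hN.le]
    _ ≤ √(A₁ ^ 2) := Real.sqrt_le_sqrt hA₁sq
    _ = A₁ := Real.sqrt_sq hA₁

lemma sqrt_card_div_three_mul_le_two_mul_sum_max_rademacherSum (A : Finset ι) :
    √(#A / 3) * 2 ^ Fintype.card ι ≤ 2 * ∑ ε : ι → Bool, max (rademacherSum A ε) 0 := by
  have hmax (s : ℝ) : 2 * max s 0 = |s| + s := by
    rcases le_total s 0 with h | h
    · rw [max_eq_right h, abs_of_nonpos h]; ring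
    · rw [max_eq_left h, abs_of_nonneg h]; ring
  rw [mul_sum]
  simp only [hmax, sum_add_distrib, sum_rademacherSum, add_zero]
  exact sqrt_card_div_three_mul_le_sum_abs_rademacherSum A

end RademacherSum

lemma sum_mul_comp_eq_sum_mul_sum_fiber {ι κ : Type*} [Fintype ι] [Fintype κ] [DecidableEq κ]
    (grp : ι → κ) (s : ι → ℝ) (f : κ → ℝ) :
    ∑ t, s t * f (grp t) = ∑ j, f j * ∑ t with grp t = j, s t := by
  rw [← sum_fiberwise univ grp]
  refine sum_congr rfl fun j _ => ?_
  rw [mul_sum]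
  exact sum_congr rfl fun t ht => by rw [(mem_filter.mp ht).2, mul_comm]

section ReluGradient

variable {E : Type*} [NormedAddCommGroup E] [InnerProductSpace ℝ E] {ι : Type*} [Fintype ι]

def reluGrad (w x : E) (y : ℝ) : E := if y * ⟪w, x⟫ ≤ 0 then (-y) • x else 0

lemma norm_reluGrad_le (w x : E) (y : ℝ) : ‖reluGrad w x y‖ ≤ |y| * ‖x‖ := by
  unfold reluGrad
  split_ifs
  · rw [norm_smul, norm_neg, Real.norm_eq_abs]
  · rw [norm_zero]; positivity

def supGradNorm (x : ι → E) (y s : ι → ℝ) : ℝ :=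
  ⨆ w : {w : E // ‖w‖ ≤ 1}, ‖∑ t, s t • reluGrad (w : E) (x t) (y t)‖

lemma supGradNorm_nonneg (x : ι → E) (y s : ι → ℝ) : 0 ≤ supGradNorm x y s :=
  Real.iSup_nonneg fun _ => norm_nonneg _

lemma norm_sum_smul_reluGrad_le_supGradNorm (x : ι → E) (y s : ι → ℝ) {w : E} (hw : ‖w‖ ≤ 1) :
    ‖∑ t, s t • reluGrad w (x t) (y t)‖ ≤ supGradNorm x y s := by
  refine le_ciSup (f := fun w : {w : E // ‖w‖ ≤ 1} => ‖∑ t, s t • reluGrad (w : E) (x t) (y t)‖)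
    ⟨∑ t, |s t| * (|y t| * ‖x t‖), ?_⟩ ⟨w, hw⟩
  rintro _ ⟨w, rfl⟩
  refine (norm_sum_le _ _).trans (sum_le_sum fun t _ => ?_)
  rw [norm_smul, Real.norm_eq_abs]
  exact mul_le_mul_of_nonneg_left (norm_reluGrad_le _ _ _) (abs_nonneg _)

lemma sum_div_le_Esign {n : ℕ} {f : (Fin n → ℝ) → ℝ} (g : (Fin n → Bool) → ℝ)
    (hg : ∀ ε, g ε ≤ f fun t => if ε t then 1 else -1) : (∑ ε, g ε) / 2 ^ n ≤ Esign n f :=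
  div_le_div_of_nonneg_right (sum_le_sum fun ε _ => hg ε) (by positivity)

lemma abs_sum_le_supGradNorm_const {u : E} (hu : ‖u‖ = 1) (s : ι → ℝ) :
    |∑ t, s t| ≤ supGradNorm (fun _ => u) (fun _ => 1) s := by
  have hgrad : reluGrad 0 u 1 = -u := by simp [reluGrad]
  have h := norm_sum_smul_reluGrad_le_supGradNorm (fun _ => u) (fun _ => 1) s
    (norm_zero.le.trans zero_le_one)
  simpa [hgrad, ← sum_smul, norm_smul, hu] using h

lemma Esign_supGradNorm_nonneg {n : ℕ} (x : Fin n → E) (y : Fin n → ℝ) :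
    0 ≤ Esign n (supGradNorm x y) := by
  simpa using sum_div_le_Esign (fun _ => 0) fun _ => supGradNorm_nonneg x y _

lemma sqrt_div_three_le_Esign_supGradNorm_const {u : E} (hu : ‖u‖ = 1) (n : ℕ) :
    √(n / 3) ≤ Esign n (supGradNorm (fun _ : Fin n => u) (fun _ => 1)) := by
  calc √(n / 3) = √(n / 3) * 2 ^ n / 2 ^ n := by field_simp
    _ ≤ (∑ ε, |rademacherSum univ ε|) / 2 ^ n := by
      gcongr
      simpa using sqrt_card_div_three_mul_le_sum_abs_rademacherSum (univ : Finset (Fin n))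
    _ ≤ _ := sum_div_le_Esign _ fun ε => abs_sum_le_supGradNorm_const hu _

end ReluGradient

section GroupedInstances

variable {E : Type*} [NormedAddCommGroup E] [InnerProductSpace ℝ E] {ι κ : Type*}
  {b : Option κ → E}

def groupedInstance (b : Option κ → E) (grp : ι → κ) (t : ι) : E :=
  (√2)⁻¹ • (b none + b (some (grp t)))

lemma inner_none_groupedInstance (hb : Orthonormal ℝ b) (grp : ι → κ) (t : ι) :
    ⟪b none, groupedInstance b grp t⟫ = (√2)⁻¹ := by
  rw [groupedInstance, real_inner_smul_right, inner_add_right, real_inner_self_eq_norm_sq,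
    hb.norm_eq_one, hb.inner_eq_zero (Option.some_ne_none _).symm]
  ring

lemma norm_groupedInstance (hb : Orthonormal ℝ b) (grp : ι → κ) (t : ι) :
    ‖groupedInstance b grp t‖ = 1 := by
  have h : ‖b none + b (some (grp t))‖ = √2 := by
    rw [← Real.sqrt_sq (norm_nonneg _), norm_add_sq_real, hb.norm_eq_one, hb.norm_eq_one,
      hb.inner_eq_zero (Option.some_ne_none _).symm]
    norm_num
  rw [groupedInstance, norm_smul, h, norm_inv, Real.norm_of_nonneg (Real.sqrt_nonneg _),
    inv_mul_cancel₀ (by positivity)]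

def signWitness [Fintype κ] (b : Option κ → E) (S : κ → ℝ) : E :=
  (√(Fintype.card κ))⁻¹ • ∑ j, (if 0 < S j then -1 else 1 : ℝ) • b (some j)

lemma norm_signWitness_le [Fintype κ] (hb : Orthonormal ℝ b) (S : κ → ℝ) :
    ‖signWitness b S‖ ≤ 1 := by
  have hv : Orthonormal ℝ (b ∘ some) := hb.comp some (Option.some_injective _)
  set τ : κ → ℝ := fun j => if 0 < S j then -1 else 1
  have hτ (j : κ) : τ j * τ j = 1 := by by_cases h : 0 < S j <;> simp [τ, h]
  have hsq : ‖∑ j, τ j • b (some j)‖ ^ 2 = Fintype.card κ := by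
    rw [← real_inner_self_eq_norm_sq]
    simpa [hτ] using hv.inner_sum τ τ univ
  rw [signWitness, norm_smul, norm_inv, Real.norm_of_nonneg (Real.sqrt_nonneg _),
    ← Real.sqrt_sq (norm_nonneg (∑ j, _)), hsq]
  exact inv_mul_le_one_of_le₀ le_rfl (Real.sqrt_nonneg _)

lemma reluGrad_signWitness_groupedInstance [Fintype κ] (hb : Orthonormal ℝ b) (grp : ι → κ)
    (S : κ → ℝ) (t : ι) : reluGrad (signWitness b S) (groupedInstance b grp t) 1 =
      if 0 < S (grp t) then -groupedInstance b grp t else 0 := by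
  have hv : Orthonormal ℝ (b ∘ some) := hb.comp some (Option.some_injective _)
  have hnone : ⟪∑ j, (if 0 < S j then -1 else 1 : ℝ) • b (some j), b none⟫ = 0 := by
    rw [sum_inner]
    exact sum_eq_zero fun j _ => by
      rw [real_inner_smul_left, hb.inner_eq_zero (Option.some_ne_none j), mul_zero]
  have hsome := hv.inner_left_fintype (fun j => if 0 < S j then -1 else 1) (grp t)
  have hk : 0 < √(Fintype.card κ) :=
    Real.sqrt_pos.mpr (by exact_mod_cast Fintype.card_pos_iff.mpr ⟨grp t⟩)
  have hinner : ⟪signWitness b S, groupedInstance b grp t⟫ =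
      (√(Fintype.card κ))⁻¹ * (√2)⁻¹ * (if 0 < S (grp t) then -1 else 1) := by
    simp only [Function.comp_apply] at hsome
    rw [signWitness, groupedInstance, real_inner_smul_left, real_inner_smul_right, inner_add_right,
      hnone, hsome]
    simp
  have hc : 0 < (√(Fintype.card κ))⁻¹ * (√2)⁻¹ := by positivity
  by_cases hS : 0 < S (grp t)
  · simp [reluGrad, hinner, hS, hc.le]
  · simp [reluGrad, hinner, hS, hc]

lemma sum_max_sum_fiber_le_supGradNorm [Fintype ι] [Fintype κ] [DecidableEq κ]
    (hb : Orthonormal ℝ b) (grp : ι → κ) (s : ι → ℝ) :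
    (√2)⁻¹ * ∑ j, max (∑ t with grp t = j, s t) 0 ≤
      supGradNorm (groupedInstance b grp) (fun _ => 1) s := by
  set S : κ → ℝ := fun j => ∑ t with grp t = j, s t
  set V := ∑ t, s t • reluGrad (signWitness b S) (groupedInstance b grp t) 1
  have hV : ⟪-b none, V⟫ = (√2)⁻¹ * ∑ j, max (S j) 0 := by
    have hterm (t : ι) : ⟪-b none, s t • reluGrad (signWitness b S) (groupedInstance b grp t) 1⟫ =
        s t * (if 0 < S (grp t) then (√2)⁻¹ else 0) := by
      rw [reluGrad_signWitness_groupedInstance hb, real_inner_smul_right]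
      split_ifs <;> simp [inner_none_groupedInstance hb]
    rw [inner_sum, sum_congr rfl fun t _ => hterm t,
      sum_mul_comp_eq_sum_mul_sum_fiber grp s fun j => if 0 < S j then (√2)⁻¹ else 0, mul_sum]
    refine sum_congr rfl fun j _ => ?_
    split_ifs with hS
    · rw [max_eq_left hS.le]
    · rw [max_eq_right (not_lt.mp hS), zero_mul, mul_zero]
  calc (√2)⁻¹ * ∑ j, max (S j) 0 = ⟪-b none, V⟫ := hV.symm
    _ ≤ ‖-b none‖ * ‖V‖ := real_inner_le_norm _ _
    _ = ‖V‖ := by rw [norm_neg, hb.norm_eq_one, one_mul]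
    _ ≤ _ := norm_sum_smul_reluGrad_le_supGradNorm _ _ _ (norm_signWitness_le hb S)

lemma mul_sqrt_div_le_Esign_supGradNorm_groupedInstance [Fintype κ] [DecidableEq κ]
    (hb : Orthonormal ℝ b) {n m : ℕ} (grp : Fin n → κ) (hgrp : ∀ j, m ≤ #{t | grp t = j}) :
    Fintype.card κ * √(m / 3) / (2 * √2) ≤
      Esign n (supGradNorm (groupedInstance b grp) (fun _ => 1)) := by
  have hgroup (j : κ) : √(m / 3) * 2 ^ n ≤
      2 * ∑ ε : Fin n → Bool, max (rademacherSum {t | grp t = j} ε) 0 := by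
    have h := sqrt_card_div_three_mul_le_two_mul_sum_max_rademacherSum {t | grp t = j}
    rw [Fintype.card_fin] at h
    refine le_trans ?_ h
    gcongr
    exact_mod_cast hgrp j
  refine le_trans ?_ (sum_div_le_Esign _ fun ε => sum_max_sum_fiber_le_supGradNorm hb grp _)
  rw [← mul_sum, sum_comm, le_div_iff₀ (by positivity)]
  have h := sum_le_sum fun j (_ : j ∈ univ) => hgroup j
  rw [sum_const, card_univ, nsmul_eq_mul, ← mul_sum] at h
  have h2 : (0 : ℝ) < √2 := by positivity
  calc Fintype.card κ * √(m / 3) / (2 * √2) * 2 ^ n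
      = (√2)⁻¹ * (Fintype.card κ * (√(m / 3) * 2 ^ n)) / 2 := by field_simp
    _ ≤ (√2)⁻¹ * (2 * ∑ j, ∑ ε : Fin n → Bool, max (rademacherSum {t | grp t = j} ε) 0) / 2 := by
      gcongr
    _ = _ := by rw [mul_div_assoc, mul_div_cancel_left₀ _ two_ne_zero]; rfl

end GroupedInstances

lemma div_le_card_filter_finOfNat_eq (n k : ℕ) [NeZero k] (j : Fin k) :
    n / k ≤ #{t : Fin n | Fin.ofNat k t = j} := by
  have hcount : #{t : Fin n | Fin.ofNat k t = j} = n.count (· ≡ j [MOD k]) := by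
    rw [Nat.count_eq_card_filter_range, ← Nat.Iio_eq_range, ← Fin.map_valEmbedding_univ,
      filter_map, card_map]
    congr 1
    ext t
    simp [Fin.ext_iff, Nat.ModEq, Nat.mod_eq_of_lt j.isLt]
  rw [hcount, Nat.count_modEq_card _ (NeZero.pos k)]
  exact Nat.le_add_right _ _

lemma exists_orthonormal_option_fin {k d : ℕ} (h : k + 1 ≤ d) :
    ∃ b : Option (Fin k) → Euc d, Orthonormal ℝ b :=
  ⟨EuclideanSpace.basisFun (Fin d) ℝ ∘ Fin.castLE h ∘ (finSuccEquiv k).symm,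
    (EuclideanSpace.basisFun (Fin d) ℝ).orthonormal.comp _
      ((Fin.castLE_injective h).comp (finSuccEquiv k).symm.injective)⟩

lemma min_sqrt_mul_le_two_mul_mul_sqrt_div {d n k : ℕ} (hk : 0 < k) (hkd : k + 1 ≤ d)
    (hkn : k ≤ n) (hk' : k + 1 = d ∨ k = n) :
    min √(d * n) n ≤ 2 * k * √(n / k : ℕ) := by
  rcases hk' with rfl | rfl
  · have hm : 1 ≤ n / k := (Nat.one_le_div_iff hk).mpr hkn
    have hn : n ≤ 2 * k * (n / k) := by
      have := Nat.lt_div_mul_add hk (a := n)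
      nlinarith
    have hdn : ((k + 1 : ℕ) : ℝ) * n ≤ (2 * k * √(n / k : ℕ)) ^ 2 := by
      rw [mul_pow, Real.sq_sqrt (Nat.cast_nonneg _)]
      have : (k + 1) * n ≤ (2 * k) ^ 2 * (n / k) := by nlinarith
      exact_mod_cast this
    calc min √((k + 1 : ℕ) * n) n ≤ √((k + 1 : ℕ) * n) := min_le_left _ _
      _ ≤ √((2 * k * √(n / k : ℕ)) ^ 2) := Real.sqrt_le_sqrt hdn
      _ = 2 * k * √(n / k : ℕ) := Real.sqrt_sq (by positivity)
  · rw [Nat.div_self hk, Nat.cast_one, Real.sqrt_one, mul_one]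
    exact (min_le_right _ _).trans (by linarith [(Nat.cast_nonneg k : (0 : ℝ) ≤ k)])

lemma mul_sqrt_div_ten_le_mul_sqrt_div_three_div {a : ℝ} (m : ℝ) (ha : 0 ≤ a) :
    a * √m / 5 ≤ a * √(m / 3) / (2 * √2) := by
  have h6 : √2 * √3 ≤ 5 / 2 := by
    rw [← Real.sqrt_mul zero_le_two, Real.sqrt_le_left (by norm_num)]
    norm_num
  rw [Real.sqrt_div' _ (by norm_num : (0 : ℝ) ≤ 3), div_le_div_iff₀ (by norm_num) (by positivity),
    mul_div_assoc', div_mul_eq_mul_div, le_div_iff₀ (by positivity)]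
  have := mul_nonneg ha (Real.sqrt_nonneg m)
  nlinarith

lemma one_div_ten_mul_min_sqrt_le_mul_sqrt_div_three {d n : ℕ} (hd : 2 ≤ d) (hn : 0 < n) :
    1 / 10 * min √((d : ℝ) * n) n ≤
      (min (d - 1) n : ℕ) * √((n / min (d - 1) n : ℕ) / 3) / (2 * √2) := by
  have h := min_sqrt_mul_le_two_mul_mul_sqrt_div (d := d) (n := n) (k := min (d - 1) n)
    (by omega) (by omega) (by omega) (by omega)
  calc 1 / 10 * min √((d : ℝ) * n) n
      ≤ 1 / 10 * (2 * (min (d - 1) n : ℕ) * √(n / min (d - 1) n : ℕ)) := by gcongr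
    _ = (min (d - 1) n : ℕ) * √(n / min (d - 1) n : ℕ) / 5 := by ring
    _ ≤ _ := mul_sqrt_div_ten_le_mul_sqrt_div_three_div _ (Nat.cast_nonneg _)

lemma one_div_ten_mul_min_sqrt_le_sqrt_div_three (n : ℕ) :
    1 / 10 * min √(((1 : ℕ) : ℝ) * n) n ≤ √(n / 3) := by
  have h3 : √3 ≤ 10 := Real.sqrt_le_left (by norm_num) |>.mpr (by norm_num)
  calc 1 / 10 * min √(((1 : ℕ) : ℝ) * n) n ≤ √n / 10 := by
        rw [Nat.cast_one, one_mul, one_div_mul_eq_div]; gcongr; exact min_le_left _ _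
    _ ≤ √n / √3 := by gcongr
    _ = √(n / 3) := (Real.sqrt_div' _ zero_le_three).symm

/-- Lower bound for the gradient Rademacher complexity of a single ReLU: there
is an absolute constant `c > 0` such that for all `n, d` there are unit-norm instances and `±1`
labels for which the expected sup (over the Euclidean unit ball) of the Euclidean norm of the
Rademacher sum of subgradients `−y·1{y⟨w,x⟩ ≤ 0}·x` is at least `c·min(√(dn), n)`. -/
theorem relu_gradient_rademacher_lower_bound :
    ∃ c : ℝ, 0 < c ∧
      ∀ n d : ℕ,
        ∃ (x : Fin n → Euc d) (y : Fin n → ℝ),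
          (∀ t, ‖x t‖ ≤ 1) ∧ (∀ t, y t = 1 ∨ y t = -1) ∧
            c * min (Real.sqrt ((d : ℝ) * n)) (n : ℝ) ≤
              Esign n (fun ε => ⨆ w : {w : Euc d // ‖w‖ ≤ 1},
                ‖∑ t, ε t •
                  (if y t * ⟪(w : Euc d), x t⟫ ≤ 0 then (-(y t)) • x t else 0)‖) := by
  refine ⟨1 / 10, by norm_num, fun n d => ?_⟩
  by_cases h0 : d = 0 ∨ n = 0
  · refine ⟨0, fun _ => 1, by simp, by simp, ?_⟩
    rw [show min √((d : ℝ) * n) n = 0 by rcases h0 with rfl | rfl <;> simp, mul_zero]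
    exact Esign_supGradNorm_nonneg _ _
  rcases (by omega : d = 1 ∨ 2 ≤ d ∧ 0 < n) with rfl | ⟨hd, hn⟩
  · have hu : ‖EuclideanSpace.single (0 : Fin 1) (1 : ℝ)‖ = 1 := by simp
    refine ⟨fun _ => EuclideanSpace.single 0 1, fun _ => 1, fun _ => hu.le, by simp, ?_⟩
    exact (one_div_ten_mul_min_sqrt_le_sqrt_div_three n).trans
      (sqrt_div_three_le_Esign_supGradNorm_const hu n)
  · set k := min (d - 1) n
    have : NeZero k := ⟨by omega⟩
    obtain ⟨b, hb⟩ := exists_orthonormal_option_fin (show k + 1 ≤ d by omega)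
    let grp (t : Fin n) : Fin k := Fin.ofNat k t
    refine ⟨groupedInstance b grp, fun _ => 1, fun t => (norm_groupedInstance hb grp t).le,
      by simp, ?_⟩
    calc 1 / 10 * min √((d : ℝ) * n) n
        ≤ Fintype.card (Fin k) * √((n / k : ℕ) / 3) / (2 * √2) := by
          rw [Fintype.card_fin]; exact one_div_ten_mul_min_sqrt_le_mul_sqrt_div_three hd hn
      _ ≤ _ := mul_sqrt_div_le_Esign_supGradNorm_groupedInstance hb grp
          (div_le_card_filter_finOfNat_eq n k)
end
end
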